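/- arXiv:1101.1385 — 6 statements merged into one kernel-verified Lean document; each statement's English description precedes it below -/
import Mathlib

section
/- Let H be a real Hilbert space, K ⊆ H nonempty closed convex, α > 0, z ∈ H, and let S, S_h : H →L[ℝ] H be two bounded linear operators. Let u be the minimizer over K of (1/2)‖S v - z‖² + (α/2)‖v‖² and u_h the minimizer over K of (1/2)‖S_h v - z‖² + (α/2)‖v‖². Set y = S u, y_h = S_h u_h, p = S†(y - z). Then α‖u - u_h‖² + ‖y_h - S u‖²_{approx} is bounded: specifically, α‖u_h - u‖² + ‖y_h - y‖² ≤ (1/α)‖(S_h† - S†)(y - z)‖² + ‖(S_h - S) u‖². -/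
/-!
Both minimisers satisfy the first-order optimality condition of their functional on the convex
set `K`. Testing the condition for `u` with `uh` and the one for `uh` with `u` and adding gives
`α‖uh - u‖² + ‖yh - y‖² ≤ -⟪(Sh† - S†)(y - z), uh - u⟫ + ⟪(Sh - S) u, yh - y⟫`,
and Cauchy–Schwarz followed by Young's inequality on each term yields the estimate.
-/

open RealInnerProductSpace ContinuousLinearMap

section FirstOrder

variable {E : Type*} [NormedAddCommGroup E] [NormedSpace ℝ E]

theorem IsMinOn.hasFDerivAt_sub_nonneg_of_convex {f : E → ℝ} {f' : E →L[ℝ] ℝ} {K : Set E}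
    {u v : E} (hK : Convex ℝ K) (hmin : IsMinOn f K u) (hf : HasFDerivAt f f' u) (hu : u ∈ K)
    (hv : v ∈ K) : 0 ≤ f' (v - u) :=
  hmin.localize.hasFDerivWithinAt_nonneg hf.hasFDerivWithinAt
    (sub_mem_posTangentConeAt_of_segment_subset (hK.segment_subset hu hv))

end FirstOrder

section Tikhonov

variable {E F : Type*} [NormedAddCommGroup E] [InnerProductSpace ℝ E]
  [NormedAddCommGroup F] [InnerProductSpace ℝ F]

noncomputable def tikhonov (S : E →L[ℝ] F) (z : F) (α : ℝ) (v : E) : ℝ :=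
  (1/2) * ‖S v - z‖^2 + (α/2) * ‖v‖^2

theorem hasFDerivAt_tikhonov (S : E →L[ℝ] F) (z : F) (α : ℝ) (u : E) :
    HasFDerivAt (tikhonov S z α) ((innerSL ℝ (S u - z)).comp S + α • innerSL ℝ u) u := by
  refine (((S.hasFDerivAt.sub_const z).norm_sq.const_mul (1/2)).add
    ((hasFDerivAt_id u).norm_sq.const_mul (α/2))).congr_fderiv ?_
  ext w
  simp only [add_apply, smul_apply, comp_apply, innerSL_apply_apply,
    coe_id', id_eq, smul_eq_mul, nsmul_eq_mul]
  ring

theorem tikhonov_variational_inequality {S : E →L[ℝ] F} {z : F} {α : ℝ} {K : Set E} {u v : E}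
    (hK : Convex ℝ K) (hmin : IsMinOn (tikhonov S z α) K u) (hu : u ∈ K) (hv : v ∈ K) :
    0 ≤ ⟪S u - z, S (v - u)⟫ + α * ⟪u, v - u⟫ :=
  hmin.hasFDerivAt_sub_nonneg_of_convex hK (hasFDerivAt_tikhonov S z α u) hu hv

end Tikhonov

theorem mul_sq_add_sq_le_of_le_mul_add_mul {α a b p r : ℝ} (hα : 0 < α)
    (h : α * a^2 + b^2 ≤ p * a + r * b) : α * a^2 + b^2 ≤ (1/α) * p^2 + r^2 := by
  have hpa : 2 * (p * a) ≤ (1/α) * p^2 + α * a^2 := by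
    have := mul_nonneg (one_div_pos.mpr hα).le (sq_nonneg (p - α * a))
    field_simp at this ⊢
    nlinarith
  nlinarith [sq_nonneg (r - b)]

theorem stmt_3_general
    {H : Type*} [NormedAddCommGroup H] [InnerProductSpace ℝ H] [CompleteSpace H]
    (K : Set H) (hKconv : Convex ℝ K)
    (α : ℝ) (hα : 0 < α) (z : H) (S Sh : H →L[ℝ] H)
    (u uh : H) (hu : u ∈ K) (huh : uh ∈ K)
    (hmin : ∀ v ∈ K, (1/2) * ‖S u - z‖^2 + (α/2) * ‖u‖^2 ≤
      (1/2) * ‖S v - z‖^2 + (α/2) * ‖v‖^2)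
    (hminh : ∀ v ∈ K, (1/2) * ‖Sh uh - z‖^2 + (α/2) * ‖uh‖^2 ≤
      (1/2) * ‖Sh v - z‖^2 + (α/2) * ‖v‖^2)
    (y yh : H) (hy : y = S u) (hyh : yh = Sh uh) :
    α * ‖uh - u‖^2 + ‖yh - y‖^2 ≤
      (1/α) * ‖(ContinuousLinearMap.adjoint Sh - ContinuousLinearMap.adjoint S) (y - z)‖^2
        + ‖(Sh - S) u‖^2 := by
  subst hy hyh
  set q := (adjoint Sh - adjoint S) (S u - z)
  have h₁ := tikhonov_variational_inequality hKconv hmin hu huh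
  have h₂ := tikhonov_variational_inequality hKconv hminh huh hu
  have hq : ⟪q, uh - u⟫ = ⟪S u - z, Sh (uh - u)⟫ - ⟪S u - z, S (uh - u)⟫ := by
    simp only [q, sub_apply, inner_sub_left, adjoint_inner_left]
  have hsum : α * ‖uh - u‖^2 + ‖Sh uh - S u‖^2 ≤ -⟪q, uh - u⟫ + ⟪(Sh - S) u, Sh uh - S u⟫ := by
    rw [hq]
    simp only [map_sub, sub_apply, inner_sub_left, inner_sub_right, real_inner_comm,
      ← real_inner_self_eq_norm_sq] at h₁ h₂ ⊢
    linarith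
  refine mul_sq_add_sq_le_of_le_mul_add_mul hα (hsum.trans (add_le_add ?_ ?_))
  · exact (neg_le_abs _).trans (abs_real_inner_le_norm q _)
  · exact real_inner_le_norm _ _

theorem stmt_3
    {H : Type*} [NormedAddCommGroup H] [InnerProductSpace ℝ H] [CompleteSpace H]
    (K : Set H) (hK : K.Nonempty) (hKc : IsClosed K) (hKconv : Convex ℝ K)
    (α : ℝ) (hα : 0 < α) (z : H) (S Sh : H →L[ℝ] H)
    (u uh : H) (hu : u ∈ K) (huh : uh ∈ K)
    (hmin : ∀ v ∈ K, (1/2) * ‖S u - z‖^2 + (α/2) * ‖u‖^2 ≤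
      (1/2) * ‖S v - z‖^2 + (α/2) * ‖v‖^2)
    (hminh : ∀ v ∈ K, (1/2) * ‖Sh uh - z‖^2 + (α/2) * ‖uh‖^2 ≤
      (1/2) * ‖Sh v - z‖^2 + (α/2) * ‖v‖^2)
    (y yh : H) (hy : y = S u) (hyh : yh = Sh uh) :
    α * ‖uh - u‖^2 + ‖yh - y‖^2 ≤
      (1/α) * ‖(ContinuousLinearMap.adjoint Sh - ContinuousLinearMap.adjoint S) (y - z)‖^2
        + ‖(Sh - S) u‖^2 :=
  stmt_3_general K hKconv α hα z S Sh u uh hu huh hmin hminh y yh hy hyh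
end

section
/- Let (Ω, μ) be a finite measure space, a < 0 < b, v ∈ L²(μ), and M(m) = ∫ min(b, max(a, v + m)) dμ. If m₀ ∈ ℝ satisfies M(m₀) = 0 and the inactive set {x : a < v(x) + m₀ < b} has positive measure, then m₀ is the unique real number with M(m₀) = 0. -/
open MeasureTheory

theorem stmt_8
    {Ω : Type*} [MeasurableSpace Ω] (μ : Measure Ω) [IsFiniteMeasure μ]
    (a b : ℝ) (ha : a < 0) (hb : 0 < b)
    (v : Lp ℝ 2 μ)
    (M : ℝ → ℝ) (hM : ∀ m, M m = ∫ x, min b (max a (v x + m)) ∂μ)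
    (m₀ : ℝ) (hm₀ : M m₀ = 0)
    (hI : 0 < μ {x | a < v x + m₀ ∧ v x + m₀ < b}) :
    ∀ m : ℝ, M m = 0 → m = m₀ := by
  intro m hm
  by_contra hne
  have hab : a < b := ha.trans hb
  set F : ℝ → Ω → ℝ := fun c x => min b (max a ((v : Ω → ℝ) x + c)) with hFdef
  have hM' : ∀ c, M c = ∫ x, F c x ∂μ := hM
  have hmeas : ∀ c, AEStronglyMeasurable (F c) μ := fun c =>
    (aemeasurable_const.min (aemeasurable_const.max
      ((Lp.aestronglyMeasurable v).aemeasurable.add_const c))).aestronglyMeasurable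
  have hint : ∀ c, Integrable (F c) μ := by
    intro c
    refine (integrable_const (max (-a) b)).mono' (hmeas c) ?_
    filter_upwards with x
    rw [Real.norm_eq_abs, abs_le]
    constructor
    · have h1 : a ≤ F c x := le_min hab.le (le_max_left _ _)
      have h2 : -a ≤ max (-a) b := le_max_left _ _
      linarith
    · exact (min_le_left _ _).trans (le_max_right _ _)
  -- main lemma applied symmetrically
  have key : ∀ c₁ c₂ : ℝ, c₁ < c₂ → M c₁ = 0 → M c₂ = 0 →
      (∀ x, a < v x + m₀ ∧ v x + m₀ < b → F c₁ x < F c₂ x) → False := by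
    intro c₁ c₂ hlt h1 h2 hstrict
    have hg0 : ∀ x, 0 ≤ F c₂ x - F c₁ x := by
      intro x
      have : F c₁ x ≤ F c₂ x := by
        dsimp only [F]
        exact min_le_min le_rfl (max_le_max le_rfl (by linarith))
      linarith
    have hintg : Integrable (fun x => F c₂ x - F c₁ x) μ := (hint c₂).sub (hint c₁)
    have hig : ∫ x, (F c₂ x - F c₁ x) ∂μ = 0 := by
      rw [integral_sub (hint c₂) (hint c₁), ← hM' c₂, ← hM' c₁, h1, h2, sub_zero]
    have hzero : (fun x => F c₂ x - F c₁ x) =ᵐ[μ] 0 :=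
      (integral_eq_zero_iff_of_nonneg_ae (Filter.Eventually.of_forall hg0) hintg).mp hig
    have hnull : μ {x | ¬ (F c₂ x - F c₁ x = 0)} = 0 := by
      have := hzero
      rw [Filter.EventuallyEq, ae_iff] at this
      simpa using this
    have hsub : {x | a < v x + m₀ ∧ v x + m₀ < b} ⊆ {x | ¬ (F c₂ x - F c₁ x = 0)} := by
      intro x hx
      have := hstrict x hx
      intro hc
      linarith
    exact absurd (measure_mono_null hsub hnull) hI.ne'
  rcases lt_or_gt_of_ne hne with h | h
  · -- m < m₀
    refine key m m₀ h hm hm₀ ?_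
    intro x ⟨h1, h2⟩
    have hFm₀ : F m₀ x = v x + m₀ := by
      dsimp only [F]
      rw [max_eq_right h1.le, min_eq_right h2.le]
    have : F m x < v x + m₀ := by
      dsimp only [F]
      calc min b (max a (v x + m)) ≤ max a (v x + m) := min_le_right _ _
        _ < v x + m₀ := max_lt h1 (by linarith)
    rw [hFm₀]; exact this
  · -- m₀ < m
    refine key m₀ m h hm₀ hm ?_
    intro x ⟨h1, h2⟩
    have hFm₀ : F m₀ x = v x + m₀ := by
      dsimp only [F]
      rw [max_eq_right h1.le, min_eq_right h2.le]
    have : v x + m₀ < F m x := by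
      dsimp only [F]
      rw [max_eq_right (by linarith : a ≤ v x + m)]
      exact lt_min h2 (by linarith)
    rw [hFm₀]; exact this
end

section
/- Let (Ω, μ) be a finite measure space, a < 0 < b, and let K₀ = {w ∈ L²(μ) : a ≤ w ≤ b a.e., ∫ w dμ = 0}. Then K₀ is nonempty, closed, and convex in L²(μ), and for v ∈ L²(μ) the metric projection of v onto K₀ equals x ↦ min(b, max(a, v(x) + m)) for some m ∈ ℝ chosen so that the integral of the result is zero. -/
/-!
Inside `L²(μ)`, `K₀` is the order interval `[a, b]` intersected with the hyperplane orthogonal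
to the constant `1`, hence closed and convex, and it contains `0`.

The integral of the clamp `x ↦ min b (max a (v x + m))` depends continuously on `m` (dominated
convergence) and tends to `a μ(Ω) < 0` and `b μ(Ω) > 0` as `m → ∓∞`, so it vanishes for some `m`.
For the resulting `w` and any `u ∈ K₀`, pointwise `(v + m - w)(w - u) ≥ 0`, while the constant
`m` is orthogonal to `w - u`; hence `⟪v - w, w - u⟫ ≥ 0`, which makes `w` the nearest point.
-/

open MeasureTheory Filter Set Topology

lemma abs_min_max_le_max_abs (a b t : ℝ) : |min b (max a t)| ≤ max |a| |b| := by
  rw [abs_le]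
  constructor
  · have : -max |a| |b| ≤ min b a := by
      rw [le_min_iff]; constructor <;> [linarith [neg_abs_le b, le_max_right |a| |b|];
        linarith [neg_abs_le a, le_max_left |a| |b|]]
    exact this.trans (min_le_min_left _ (le_max_left _ _))
  · exact (min_le_left _ _).trans ((le_abs_self b).trans (le_max_right _ _))

lemma sub_min_max_mul_nonneg {a b t u : ℝ} (hau : a ≤ u) (hub : u ≤ b) :
    0 ≤ (t - min b (max a t)) * (min b (max a t) - u) := by
  rcases le_total t a with hta | hat
  · rw [max_eq_left hta, min_eq_right (hau.trans hub)]; nlinarith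
  rcases le_total t b with htb | hbt
  · rw [max_eq_right hat, min_eq_right htb]; simp
  · rw [max_eq_right hat, min_eq_left hbt]; nlinarith

theorem norm_sub_le_norm_sub_of_inner_nonneg {E : Type*} [NormedAddCommGroup E]
    [InnerProductSpace ℝ E] {v w u : E} (h : 0 ≤ inner ℝ (v - w) (w - u)) :
    ‖v - w‖ ≤ ‖v - u‖ := by
  have hsq : ‖v - w‖ ^ 2 ≤ ‖v - u‖ ^ 2 := by
    rw [← sub_add_sub_cancel v w u, norm_add_sq_real]
    nlinarith [sq_nonneg ‖w - u‖]
  exact (sq_le_sq₀ (norm_nonneg _) (norm_nonneg _)).1 hsq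

namespace MeasureTheory

variable {Ω : Type*} [MeasurableSpace Ω] {μ : Measure Ω}

instance Lp.instPosSMulMono {E 𝕜 : Type*} {p : ENNReal} [NormedAddCommGroup E] [PartialOrder E]
    [NormedRing 𝕜] [PartialOrder 𝕜] [Module 𝕜 E] [IsBoundedSMul 𝕜 E] [PosSMulMono 𝕜 E] :
    PosSMulMono 𝕜 (Lp E p μ) where
  smul_le_smul_of_nonneg_left c hc f g hfg := by
    rw [← Lp.coeFn_le] at hfg ⊢
    filter_upwards [Lp.coeFn_smul c f, Lp.coeFn_smul c g, hfg] with x hf hg hx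
    rw [hf, hg, Pi.smul_apply, Pi.smul_apply]
    exact smul_le_smul_of_nonneg_left hx hc

theorem L2.inner_sub_nonneg_of_ae_eq_min_max {a b : ℝ} {v w u : Lp ℝ 2 μ}
    (hw : w =ᵐ[μ] fun x => min b (max a (v x))) (hu : ∀ᵐ x ∂μ, a ≤ u x ∧ u x ≤ b) :
    0 ≤ inner ℝ (v - w) (w - u) := by
  rw [L2.inner_def]
  refine integral_nonneg_of_ae ?_
  filter_upwards [Lp.coeFn_sub v w, Lp.coeFn_sub w u, hw, hu] with x hvw hwu hwx hux
  rw [hvw, hwu, Pi.sub_apply, Pi.sub_apply, hwx, Real.inner_apply, Pi.zero_apply]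
  exact sub_min_max_mul_nonneg hux.1 hux.2

variable [IsFiniteMeasure μ]

theorem Lp.mem_Icc_const_iff {E : Type*} {p : ENNReal} [NormedAddCommGroup E] [PartialOrder E]
    {a b : E} {w : Lp E p μ} :
    w ∈ Icc (Lp.const p μ a) (Lp.const p μ b) ↔ ∀ᵐ x ∂μ, a ≤ w x ∧ w x ≤ b := by
  rw [mem_Icc, ← Lp.coeFn_le, ← Lp.coeFn_le, EventuallyLE, EventuallyLE, ← eventually_and]
  refine eventually_congr ?_
  filter_upwards [Lp.coeFn_const p μ a, Lp.coeFn_const p μ b] with x ha hb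
  rw [ha, hb, Function.const_apply, Function.const_apply]

theorem L2.inner_const_left {E : Type*} [NormedAddCommGroup E] [InnerProductSpace ℝ E]
    [CompleteSpace E] (c : E) (f : Lp E 2 μ) :
    inner ℝ (Lp.const 2 μ c) f = inner ℝ c (∫ x, f x ∂μ) := by
  rw [← indicatorConstLp_univ, L2.inner_indicatorConstLp_eq_inner_setIntegral, setIntegral_univ]

theorem L2.setOf_ae_mem_Icc_and_integral_eq_zero_eq (a b : ℝ) :
    {w : Lp ℝ 2 μ | (∀ᵐ x ∂μ, a ≤ w x ∧ w x ≤ b) ∧ ∫ x, w x ∂μ = 0} =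
      Icc (Lp.const 2 μ a) (Lp.const 2 μ b) ∩
        ((innerSL ℝ (Lp.const 2 μ (1 : ℝ))).ker : Set (Lp ℝ 2 μ)) := by
  ext w
  rw [mem_inter_iff, Lp.mem_Icc_const_iff, SetLike.mem_coe, LinearMap.mem_ker,
    ContinuousLinearMap.coe_coe, innerSL_apply_apply, L2.inner_const_left, Real.inner_apply,
    one_mul]
  rfl

section Clamp

variable {a b : ℝ} {f : Ω → ℝ}

theorem memLp_min_max (hf : AEStronglyMeasurable f μ) (p : ENNReal) :
    MemLp (fun x => min b (max a (f x))) p μ :=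
  MemLp.of_bound
    ((continuous_const.min (continuous_const.max continuous_id)).comp_aestronglyMeasurable hf)
    _ (ae_of_all _ fun x => abs_min_max_le_max_abs a b (f x))

theorem tendsto_integral_min_max_add {l : Filter ℝ} [l.IsCountablyGenerated] {g : Ω → ℝ}
    (hf : AEStronglyMeasurable f μ)
    (hg : ∀ x, Tendsto (fun m => min b (max a (f x + m))) l (𝓝 (g x))) :
    Tendsto (fun m => ∫ x, min b (max a (f x + m)) ∂μ) l (𝓝 (∫ x, g x ∂μ)) :=
  tendsto_integral_filter_of_dominated_convergence (fun _ => max |a| |b|)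
    (Eventually.of_forall fun m => (memLp_min_max (hf.add_const m) 1).aestronglyMeasurable)
    (Eventually.of_forall fun _ => ae_of_all _ fun _ => abs_min_max_le_max_abs a b _)
    (integrable_const _) (ae_of_all _ hg)

theorem tendsto_integral_min_max_add_atTop (hf : AEStronglyMeasurable f μ) :
    Tendsto (fun m => ∫ x, min b (max a (f x + m)) ∂μ) atTop (𝓝 (μ.real univ * b)) := by
  have := tendsto_integral_min_max_add (a := a) (b := b) (g := fun _ => b) hf fun x =>
    tendsto_const_nhds.congr' <| (eventually_ge_atTop (b - f x)).mono fun m hm =>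
      (min_eq_left ((le_max_right _ _).trans' (by linarith))).symm
  simpa using this

theorem tendsto_integral_min_max_add_atBot (hab : a ≤ b) (hf : AEStronglyMeasurable f μ) :
    Tendsto (fun m => ∫ x, min b (max a (f x + m)) ∂μ) atBot (𝓝 (μ.real univ * a)) := by
  have := tendsto_integral_min_max_add (a := a) (b := b) (g := fun _ => a) hf fun x =>
    tendsto_const_nhds.congr' <| (eventually_le_atBot (a - f x)).mono fun m hm => by
      simp only [max_eq_left (show f x + m ≤ a by linarith), min_eq_right hab]
  simpa using this

theorem exists_integral_min_max_add_eq_zero [NeZero μ] (ha : a < 0) (hb : 0 < b)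
    (hf : AEStronglyMeasurable f μ) :
    ∃ m : ℝ, ∫ x, min b (max a (f x + m)) ∂μ = 0 := by
  have hcont : Continuous fun m => ∫ x, min b (max a (f x + m)) ∂μ :=
    continuous_iff_continuousAt.2 fun m₀ => tendsto_integral_min_max_add hf fun x =>
      (continuous_const.min (continuous_const.max (continuous_const_add (f x)))).tendsto m₀
  have hμ : 0 < μ.real univ := by simp
  obtain ⟨m₁, hm₁⟩ := ((tendsto_integral_min_max_add_atBot (ha.trans hb).le hf).eventually
    (eventually_lt_nhds (mul_neg_of_pos_of_neg hμ ha))).exists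
  obtain ⟨m₂, hm₂⟩ := ((tendsto_integral_min_max_add_atTop hf).eventually
    (eventually_gt_nhds (mul_pos hμ hb))).exists
  exact intermediate_value_univ m₁ m₂ hcont ⟨hm₁.le, hm₂.le⟩

end Clamp

end MeasureTheory

open MeasureTheory

theorem stmt_9
    {Ω : Type*} [MeasurableSpace Ω] (μ : Measure Ω) [IsFiniteMeasure μ]
    (hμ : 0 < μ Set.univ)
    (a b : ℝ) (ha : a < 0) (hb : 0 < b)
    (K₀ : Set (Lp ℝ 2 μ))
    (hK₀ : K₀ = {w : Lp ℝ 2 μ | (∀ᵐ x ∂μ, a ≤ w x ∧ w x ≤ b) ∧ ∫ x, w x ∂μ = 0})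
    (v : Lp ℝ 2 μ) :
    K₀.Nonempty ∧ IsClosed K₀ ∧ Convex ℝ K₀ ∧
      ∃ w ∈ K₀, ∃ m : ℝ, (w : Ω → ℝ) =ᵐ[μ] (fun x => min b (max a (v x + m))) ∧
        ∀ u ∈ K₀, ‖v - w‖ ≤ ‖v - u‖ := by
  have hK := hK₀.trans (L2.setOf_ae_mem_Icc_and_integral_eq_zero_eq (μ := μ) a b)
  have h0 : (0 : Lp ℝ 2 μ) ∈ K₀ := by
    refine hK ▸ ⟨Lp.mem_Icc_const_iff.2 ((Lp.coeFn_zero ℝ 2 μ).mono fun x hx => ?_), zero_mem _⟩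
    rw [hx, Pi.zero_apply]
    exact ⟨ha.le, hb.le⟩
  have : NeZero μ := ⟨fun h => by simp [h] at hμ⟩
  obtain ⟨m, hm⟩ := exists_integral_min_max_add_eq_zero ha hb (Lp.aestronglyMeasurable v)
  set w := (memLp_min_max (a := a) (b := b) ((Lp.aestronglyMeasurable v).add_const m) 2).toLp
  have hw : w =ᵐ[μ] fun x => min b (max a (v x + m)) := MemLp.coeFn_toLp _
  have hw_int : ∫ x, w x ∂μ = 0 := by rw [integral_congr_ae hw, hm]
  have hw_mem : w ∈ K₀ := by
    rw [hK₀]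
    exact ⟨hw.mono fun x hx => by simp [hx, (ha.trans hb).le], hw_int⟩
  refine ⟨⟨0, h0⟩, hK ▸ isClosed_Icc.inter (ContinuousLinearMap.isClosed_ker _),
    hK ▸ (convex_Icc _ _).inter (Submodule.convex _), w, hw_mem, m, hw,
    fun u hu => norm_sub_le_norm_sub_of_inner_nonneg ?_⟩
  rw [hK₀] at hu
  have hshift : inner ℝ (v - w) (w - u) = inner ℝ (v + Lp.const 2 μ m - w) (w - u) := by
    rw [add_sub_right_comm, inner_add_left, inner_sub_right (Lp.const 2 μ m),
      L2.inner_const_left, L2.inner_const_left, hw_int, hu.2, sub_self, add_zero]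
  rw [hshift]
  refine L2.inner_sub_nonneg_of_ae_eq_min_max ?_ hu.1
  filter_upwards [hw, Lp.coeFn_add v (Lp.const 2 μ m), Lp.coeFn_const 2 μ m] with x h1 h2 h3
  rw [h1, h2, Pi.add_apply, h3, Function.const_apply]
end

section
/- Let L : L²(μ) → L²(μ') be the lift L f = f ∘ T with pushforward density ρ satisfying |ρ - 1| ≤ c h² a.e. Then the operator norm of L* - L⁻¹ from L²(μ') to L²(μ) is at most c h² · ‖L⁻¹‖, where L⁻¹ g = g ∘ T⁻¹. In particular ‖L* - L⁻¹‖ ≤ c h² (1 - c h²)^{-1/2} whenever c h² < 1. -/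
/-!
By the change of variables `T_* μ' = ρ μ`, `⟪g, L f⟫ = ∫ ρ · (L⁻¹ g) · f dμ`; hence
`L* g = ρ · L⁻¹ g` and `(L* - L⁻¹) g = (ρ - 1) · L⁻¹ g`, whose norm is at most `c h² ‖L⁻¹ g‖`.
Taking `g = L f` gives `‖L f‖² = ∫ ρ f² dμ ≥ (1 - c h²) ‖f‖²`, so `‖L⁻¹‖ ≤ (1 - c h²)^(-1/2)`.
-/

open MeasureTheory
open scoped ENNReal RealInnerProductSpace

theorem ENNReal.ne_top_of_abs_toReal_sub_one_le {a : ℝ≥0∞} {ε : ℝ}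
    (h : |a.toReal - 1| ≤ ε) (hε : ε < 1) : a ≠ ∞ := by
  rintro rfl
  norm_num at h
  linarith

structure IsDensityLift {Ω Ω' : Type*} [MeasurableSpace Ω] [MeasurableSpace Ω']
    (μ : Measure Ω) (μ' : Measure Ω') (T : Ω' ≃ᵐ Ω) (ρ : Ω → ℝ≥0∞)
    (L : Lp ℝ 2 μ ≃L[ℝ] Lp ℝ 2 μ') : Prop where
  measurable_density : Measurable ρ
  density_lt_top : ∀ᵐ z ∂μ, ρ z < ∞
  map_eq_withDensity : μ'.map T = μ.withDensity ρ
  coeFn_apply : ∀ f : Lp ℝ 2 μ, (L f : Ω' → ℝ) =ᵐ[μ'] fun y => f (T y)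
  coeFn_symm_apply : ∀ g : Lp ℝ 2 μ', (L.symm g : Ω → ℝ) =ᵐ[μ] fun z => g (T.symm z)

namespace IsDensityLift

variable {Ω Ω' : Type*} [MeasurableSpace Ω] [MeasurableSpace Ω'] {μ : Measure Ω}
  {μ' : Measure Ω'} {T : Ω' ≃ᵐ Ω} {ρ : Ω → ℝ≥0∞} {L : Lp ℝ 2 μ ≃L[ℝ] Lp ℝ 2 μ'}

theorem integrable_density_mul (hT : IsDensityLift μ μ' T ρ L) (g : Lp ℝ 2 μ')
    (f : Lp ℝ 2 μ) : Integrable (fun z => (ρ z).toReal * (L.symm g z * f z)) μ := by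
  suffices Integrable (fun z => (ρ z).toReal • (g (T.symm z) * f z)) μ by
    refine this.congr ?_
    filter_upwards [hT.coeFn_symm_apply g] with z hz
    rw [hz, smul_eq_mul]
  rw [← integrable_withDensity_iff_integrable_smul' hT.measurable_density hT.density_lt_top,
    ← hT.map_eq_withDensity, integrable_map_equiv]
  refine (L2.integrable_inner (𝕜 := ℝ) g (L f)).congr ?_
  filter_upwards [hT.coeFn_apply f] with y hy
  simp [hy, mul_comm]

theorem inner_apply_eq_integral (hT : IsDensityLift μ μ' T ρ L) (g : Lp ℝ 2 μ')
    (f : Lp ℝ 2 μ) : ⟪g, L f⟫ = ∫ z, (ρ z).toReal * (L.symm g z * f z) ∂μ := by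
  calc ⟪g, L f⟫ = ∫ y, g (T.symm (T y)) * f (T y) ∂μ' := by
        rw [L2.inner_def]
        refine integral_congr_ae ?_
        filter_upwards [hT.coeFn_apply f] with y hy
        simp [hy, mul_comm]
    _ = ∫ z, (ρ z).toReal • (g (T.symm z) * f z) ∂μ := by
        rw [← integral_map_equiv T (fun z => g (T.symm z) * f z), hT.map_eq_withDensity,
          integral_withDensity_eq_integral_toReal_smul hT.measurable_density hT.density_lt_top]
    _ = ∫ z, (ρ z).toReal * (L.symm g z * f z) ∂μ := by
        refine integral_congr_ae ?_
        filter_upwards [hT.coeFn_symm_apply g] with z hz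
        rw [hz, smul_eq_mul]

theorem adjoint_apply_ae_eq (hT : IsDensityLift μ μ' T ρ L) {C : ℝ}
    (hbdd : ∀ᵐ z ∂μ, (ρ z).toReal ≤ C) (g : Lp ℝ 2 μ') :
    (ContinuousLinearMap.adjoint (L : Lp ℝ 2 μ →L[ℝ] Lp ℝ 2 μ') g : Ω → ℝ)
      =ᵐ[μ] fun z => (ρ z).toReal * L.symm g z := by
  have hmem : MemLp (fun z => (ρ z).toReal * L.symm g z) 2 μ := by
    refine (Lp.memLp (L.symm g)).of_le_mul (c := C)
      (hT.measurable_density.ennreal_toReal.aestronglyMeasurable.mul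
        (Lp.aestronglyMeasurable _)) ?_
    filter_upwards [hbdd] with z hz
    rw [norm_mul, Real.norm_of_nonneg ENNReal.toReal_nonneg]
    exact mul_le_mul_of_nonneg_right hz (norm_nonneg _)
  suffices ContinuousLinearMap.adjoint (L : Lp ℝ 2 μ →L[ℝ] Lp ℝ 2 μ') g = hmem.toLp _ from
    this ▸ hmem.coeFn_toLp
  refine ext_inner_right ℝ fun f => ?_
  rw [ContinuousLinearMap.adjoint_inner_left, ContinuousLinearEquiv.coe_coe,
    hT.inner_apply_eq_integral, L2.inner_def]
  refine integral_congr_ae ?_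
  filter_upwards [hmem.coeFn_toLp] with z hz
  simp [hz, mul_comm, mul_left_comm]

theorem norm_adjoint_sub_symm_apply_le (hT : IsDensityLift μ μ' T ρ L) {ε : ℝ}
    (hdens : ∀ᵐ z ∂μ, |(ρ z).toReal - 1| ≤ ε) (g : Lp ℝ 2 μ') :
    ‖(ContinuousLinearMap.adjoint (L : Lp ℝ 2 μ →L[ℝ] Lp ℝ 2 μ')
        - (L.symm : Lp ℝ 2 μ' →L[ℝ] Lp ℝ 2 μ)) g‖ ≤ ε * ‖L.symm g‖ := by
  have hbdd : ∀ᵐ z ∂μ, (ρ z).toReal ≤ 1 + ε :=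
    hdens.mono fun z hz => by linarith [le_abs_self ((ρ z).toReal - 1)]
  refine Lp.norm_le_mul_norm_of_ae_le_mul ?_
  rw [sub_apply, ContinuousLinearEquiv.coe_coe]
  filter_upwards [Lp.coeFn_sub (ContinuousLinearMap.adjoint (L : Lp ℝ 2 μ →L[ℝ] Lp ℝ 2 μ') g)
    (L.symm g), hT.adjoint_apply_ae_eq hbdd g, hdens] with z hsub hadj hz
  rw [hsub, Pi.sub_apply, hadj, ← sub_one_mul, norm_mul,
    Real.norm_eq_abs]
  exact mul_le_mul_of_nonneg_right hz (norm_nonneg _)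

theorem norm_adjoint_sub_symm_le (hT : IsDensityLift μ μ' T ρ L) {ε : ℝ} (hε : 0 ≤ ε)
    (hdens : ∀ᵐ z ∂μ, |(ρ z).toReal - 1| ≤ ε) :
    ‖ContinuousLinearMap.adjoint (L : Lp ℝ 2 μ →L[ℝ] Lp ℝ 2 μ')
        - (L.symm : Lp ℝ 2 μ' →L[ℝ] Lp ℝ 2 μ)‖
      ≤ ε * ‖(L.symm : Lp ℝ 2 μ' →L[ℝ] Lp ℝ 2 μ)‖ := by
  refine ContinuousLinearMap.opNorm_le_bound _ (by positivity) fun g => ?_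
  calc _ ≤ ε * ‖L.symm g‖ := hT.norm_adjoint_sub_symm_apply_le hdens g
    _ ≤ ε * (‖(L.symm : Lp ℝ 2 μ' →L[ℝ] Lp ℝ 2 μ)‖ * ‖g‖) :=
        mul_le_mul_of_nonneg_left ((L.symm : Lp ℝ 2 μ' →L[ℝ] Lp ℝ 2 μ).le_opNorm g) hε
    _ = _ := (mul_assoc _ _ _).symm

theorem mul_norm_sq_le_norm_apply_sq (hT : IsDensityLift μ μ' T ρ L) {δ : ℝ}
    (hδ : ∀ᵐ z ∂μ, δ ≤ (ρ z).toReal) (f : Lp ℝ 2 μ) : δ * ‖f‖ ^ 2 ≤ ‖L f‖ ^ 2 := by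
  have hint := hT.integrable_density_mul (L f) f
  rw [L.symm_apply_apply] at hint
  rw [← real_inner_self_eq_norm_sq, ← real_inner_self_eq_norm_sq, hT.inner_apply_eq_integral,
    L.symm_apply_apply, L2.inner_def, ← integral_const_mul]
  refine integral_mono_ae ((L2.integrable_inner (𝕜 := ℝ) f f).const_mul δ) hint ?_
  filter_upwards [hδ] with z hz
  simpa [Real.inner_apply, sq] using mul_le_mul_of_nonneg_right hz (mul_self_nonneg (f z))

theorem norm_symm_le_inv_sqrt (hT : IsDensityLift μ μ' T ρ L) {δ : ℝ} (hδ₀ : 0 < δ)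
    (hδ : ∀ᵐ z ∂μ, δ ≤ (ρ z).toReal) :
    ‖(L.symm : Lp ℝ 2 μ' →L[ℝ] Lp ℝ 2 μ)‖ ≤ (√δ)⁻¹ := by
  refine ContinuousLinearMap.opNorm_le_bound _ (by positivity) fun g => ?_
  have hsq := hT.mul_norm_sq_le_norm_apply_sq hδ (L.symm g)
  rw [L.apply_symm_apply, ← Real.sq_sqrt hδ₀.le, ← mul_pow,
    pow_le_pow_iff_left₀ (by positivity) (norm_nonneg g) two_ne_zero] at hsq
  rwa [inv_mul_eq_div, le_div_iff₀' (Real.sqrt_pos.2 hδ₀)]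

end IsDensityLift

theorem stmt_12_general
    {Ω Ω' : Type*} [MeasurableSpace Ω] [MeasurableSpace Ω']
    (μ : Measure Ω) (μ' : Measure Ω')
    (T : Ω' ≃ᵐ Ω)
    (ρ : Ω → ENNReal) (hρ : Measurable ρ)
    (c h : ℝ) (hc : 0 < c) (hch : c * h^2 < 1)
    (hpush : Measure.map T μ' = μ.withDensity ρ)
    (hdens : ∀ᵐ x ∂μ, |(ρ x).toReal - 1| ≤ c * h^2)
    (L : Lp ℝ 2 μ ≃L[ℝ] Lp ℝ 2 μ')
    (hL : ∀ f : Lp ℝ 2 μ, (L f : Ω' → ℝ) =ᵐ[μ'] fun x => f (T x))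
    (hLinv : ∀ g : Lp ℝ 2 μ', (L.symm g : Ω → ℝ) =ᵐ[μ] fun x => g (T.symm x)) :
    ‖ContinuousLinearMap.adjoint (L : Lp ℝ 2 μ →L[ℝ] Lp ℝ 2 μ')
        - (L.symm : Lp ℝ 2 μ' →L[ℝ] Lp ℝ 2 μ)‖
      ≤ c * h^2 * ‖(L.symm : Lp ℝ 2 μ' →L[ℝ] Lp ℝ 2 μ)‖ ∧
    ‖ContinuousLinearMap.adjoint (L : Lp ℝ 2 μ →L[ℝ] Lp ℝ 2 μ')
        - (L.symm : Lp ℝ 2 μ' →L[ℝ] Lp ℝ 2 μ)‖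
      ≤ c * h^2 / Real.sqrt (1 - c * h^2) := by
  have hε : 0 ≤ c * h ^ 2 := by positivity
  have hfin : ∀ᵐ z ∂μ, ρ z < ∞ :=
    hdens.mono fun z hz => (ENNReal.ne_top_of_abs_toReal_sub_one_le hz hch).lt_top
  have hT : IsDensityLift μ μ' T ρ L := ⟨hρ, hfin, hpush, hL, hLinv⟩
  have hδ : ∀ᵐ z ∂μ, 1 - c * h ^ 2 ≤ (ρ z).toReal :=
    hdens.mono fun z hz => by linarith [neg_abs_le ((ρ z).toReal - 1)]
  have hfirst := hT.norm_adjoint_sub_symm_le hε hdens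
  refine ⟨hfirst, hfirst.trans ?_⟩
  rw [div_eq_mul_inv]
  exact mul_le_mul_of_nonneg_left (hT.norm_symm_le_inv_sqrt (by linarith) hδ) hε

theorem stmt_12
    {Ω Ω' : Type*} [MeasurableSpace Ω] [MeasurableSpace Ω']
    (μ : Measure Ω) (μ' : Measure Ω')
    (T : Ω' ≃ᵐ Ω)
    (ρ : Ω → ENNReal) (hρ : Measurable ρ)
    (c h : ℝ) (hc : 0 < c) (hh : 0 ≤ h) (hch : c * h^2 < 1)
    (hpush : Measure.map T μ' = μ.withDensity ρ)
    (hdens : ∀ᵐ x ∂μ, |(ρ x).toReal - 1| ≤ c * h^2)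
    (L : Lp ℝ 2 μ ≃L[ℝ] Lp ℝ 2 μ')
    (hL : ∀ f : Lp ℝ 2 μ, (L f : Ω' → ℝ) =ᵐ[μ'] fun x => f (T x))
    (hLinv : ∀ g : Lp ℝ 2 μ', (L.symm g : Ω → ℝ) =ᵐ[μ] fun x => g (T.symm x)) :
    ‖ContinuousLinearMap.adjoint (L : Lp ℝ 2 μ →L[ℝ] Lp ℝ 2 μ')
        - (L.symm : Lp ℝ 2 μ' →L[ℝ] Lp ℝ 2 μ)‖
      ≤ c * h^2 * ‖(L.symm : Lp ℝ 2 μ' →L[ℝ] Lp ℝ 2 μ)‖ ∧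
    ‖ContinuousLinearMap.adjoint (L : Lp ℝ 2 μ →L[ℝ] Lp ℝ 2 μ')
        - (L.symm : Lp ℝ 2 μ' →L[ℝ] Lp ℝ 2 μ)‖
      ≤ c * h^2 / Real.sqrt (1 - c * h^2) :=
  stmt_12_general μ μ' T ρ hρ c h hc hch hpush hdens L hL hLinv
end

section
/- Let H = L²(μ) for a measure space (Ω, μ), let χ : Ω → {0,1} be measurable, regarded as the multiplication operator M_χ on H, α > 0, and S : H →L[ℝ] H. Then the operator I + (1/α) M_χ S† S restricted as a map on H is invertible. More precisely, for any g ∈ H, the equation u + (1/α) χ·(S†S u) = g has a unique solution u ∈ H. -/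
/-!
Write `P = M_χ` and `A = α⁻¹ S†S`. `P` is an orthogonal projection and `A` is positive, so
`P A P` is positive and `1 + P A P` is coercive, hence invertible. Since `P A = P (P A)`,
Jacobson's lemma (`1 + xy` is invertible iff `1 + yx` is) transfers invertibility from
`1 + (P A) P` to `1 + P (P A) = 1 + P A`.
-/

open MeasureTheory
open scoped InnerProductSpace

theorem isUnit_one_add_mul_comm {R : Type*} [Ring R] {a b : R} (h : IsUnit (1 + a * b)) :
    IsUnit (1 + b * a) := by
  have := (spectrum.unit_mem_mul_comm (R := ℤ) (a := a) (b := b) (r := -1)).not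
  simp only [spectrum.mem_iff, not_not, Units.val_neg, Units.val_one, map_neg, map_one] at this
  rw [← neg_add', IsUnit.neg_iff, ← neg_add', IsUnit.neg_iff] at this
  exact this.mp h

namespace ContinuousLinearMap

variable {𝕜 E : Type*} [RCLike 𝕜] [NormedAddCommGroup E] [InnerProductSpace 𝕜 E]
  [CompleteSpace E]

theorem IsPositive.isUnit_one_add {T : E →L[𝕜] E} (hT : T.IsPositive) : IsUnit (1 + T) := by
  refine isUnit_of_forall_le_norm_inner_map _ one_pos fun x => ?_
  calc ‖x‖ ^ 2 * (1 : NNReal) ≤ ‖x‖ ^ 2 + RCLike.re ⟪T x, x⟫_𝕜 := by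
        simpa using hT.re_inner_nonneg_left x
    _ = RCLike.re ⟪(1 + T) x, x⟫_𝕜 := by
        simp [inner_add_left]
    _ ≤ ‖⟪(1 + T) x, x⟫_𝕜‖ := RCLike.re_le_norm _

theorem _root_.IsStarProjection.isUnit_one_add_mul {P A : E →L[𝕜] E}
    (hP : IsStarProjection P) (hA : A.IsPositive) : IsUnit (1 + P * A) := by
  have hPAP : (P * A * P).IsPositive := by
    simpa [hP.isSelfAdjoint.adjoint_eq, mul_def, comp_assoc] using hA.conj_adjoint P
  rw [← hP.isIdempotentElem.eq, mul_assoc]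
  exact isUnit_one_add_mul_comm (by simpa [mul_assoc] using hPAP.isUnit_one_add)

end ContinuousLinearMap

namespace MeasureTheory.L2

variable {Ω : Type*} [MeasurableSpace Ω] {μ : Measure Ω} {χ : Ω → ℝ}
  {M : Lp ℝ 2 μ →L[ℝ] Lp ℝ 2 μ}

theorem isSelfAdjoint_of_ae_eq_mul
    (hM : ∀ f : Lp ℝ 2 μ, (M f : Ω → ℝ) =ᵐ[μ] fun x => χ x * f x) :
    IsSelfAdjoint M := by
  refine ContinuousLinearMap.isSelfAdjoint_iff_isSymmetric.mpr fun f g => ?_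
  rw [inner_def, inner_def]
  refine integral_congr_ae ?_
  filter_upwards [hM f, hM g] with x hf hg
  simp only [ContinuousLinearMap.coe_coe, hf, hg, RCLike.inner_apply, conj_trivial]
  ring

theorem isStarProjection_of_ae_eq_mul (hχ : ∀ x, χ x = 0 ∨ χ x = 1)
    (hM : ∀ f : Lp ℝ 2 μ, (M f : Ω → ℝ) =ᵐ[μ] fun x => χ x * f x) :
    IsStarProjection M where
  isIdempotentElem := by
    refine ContinuousLinearMap.ext fun f => Lp.ext ?_
    filter_upwards [hM (M f), hM f] with x hMMf hMf
    rw [mul_apply_eq_comp, hMMf, hMf]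
    rcases hχ x with h | h <;> simp [h]
  isSelfAdjoint := isSelfAdjoint_of_ae_eq_mul hM

end MeasureTheory.L2

theorem stmt_15_general
    {Ω : Type*} [MeasurableSpace Ω] (μ : Measure Ω)
    (χ : Ω → ℝ) (hχval : ∀ x, χ x = 0 ∨ χ x = 1)
    (Mχ : Lp ℝ 2 μ →L[ℝ] Lp ℝ 2 μ)
    (hMχ : ∀ f : Lp ℝ 2 μ, (Mχ f : Ω → ℝ) =ᵐ[μ] fun x => χ x * f x)
    (α : ℝ) (hα : 0 < α) (S : Lp ℝ 2 μ →L[ℝ] Lp ℝ 2 μ) :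
    ∀ g : Lp ℝ 2 μ, ∃! u : Lp ℝ 2 μ,
      u + (1/α) • Mχ ((ContinuousLinearMap.adjoint S) (S u)) = g := by
  have hA : ((1 / α) • (ContinuousLinearMap.adjoint S ∘L S)).IsPositive :=
    (ContinuousLinearMap.isPositive_adjoint_comp_self S).smul_of_nonneg (by positivity)
  have hT := (L2.isStarProjection_of_ae_eq_mul hχval hMχ).isUnit_one_add_mul hA
  simpa using (ContinuousLinearMap.isUnit_iff_bijective.mp hT).existsUnique

theorem stmt_15
    {Ω : Type*} [MeasurableSpace Ω] (μ : Measure Ω)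
    (χ : Ω → ℝ) (hχmeas : Measurable χ) (hχval : ∀ x, χ x = 0 ∨ χ x = 1)
    (Mχ : Lp ℝ 2 μ →L[ℝ] Lp ℝ 2 μ)
    (hMχ : ∀ f : Lp ℝ 2 μ, (Mχ f : Ω → ℝ) =ᵐ[μ] fun x => χ x * f x)
    (α : ℝ) (hα : 0 < α) (S : Lp ℝ 2 μ →L[ℝ] Lp ℝ 2 μ) :
    ∀ g : Lp ℝ 2 μ, ∃! u : Lp ℝ 2 μ,
      u + (1/α) • Mχ ((ContinuousLinearMap.adjoint S) (S u)) = g :=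
  stmt_15_general μ χ hχval Mχ hMχ α hα S
end

section
/- Let (Ω, μ) be a finite measure space, a < 0 < b, v ∈ L∞(μ) ∩ L²(μ), m₀ the unique root of M(m) = ∫ min(b, max(a, v + m)) dμ, and assume the inactive set I = {a < v + m₀ < b} has measure μ(I) > 0. If ṽ ∈ L²(μ) satisfies ‖ṽ - v‖_{L¹} ≤ η with η sufficiently small, and m̃ is a root of M̃(m) = ∫ min(b, max(a, ṽ + m)) dμ, then |m̃ - m₀| ≤ C η / μ(I_δ) where I_δ = {a + δ ≤ v + m₀ ≤ b - δ} for suitable δ > 0 and a constant C depending only on a, b. -/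
/-!
On the `δ`-interior `I_δ` of the inactive set, the clipping acts as the identity under shifts
of size at most `δ`, so `M(m₀ + s) ≥ s μ(I_δ)` and `M(m₀ - s) ≤ -s μ(I_δ)` for `0 ≤ s ≤ δ`.
Clipping is 1-Lipschitz, so the perturbed `M̃` stays within `‖ṽ - v‖₁ ≤ η` of `M`; being
monotone, `M̃` can only vanish in `[m₀ - s, m₀ + s]` once `s μ(I_δ) > η`, and
`s = 2η / μ(I_δ)` works as long as it is `≤ δ`.
-/

open MeasureTheory Set

lemma abs_min_max_sub_min_max_le (a b s t : ℝ) :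
    |min b (max a s) - min b (max a t)| ≤ |s - t| :=
  calc |min b (max a s) - min b (max a t)|
      ≤ max |b - b| |max a s - max a t| := abs_min_sub_min_le_max _ _ _ _
    _ ≤ max |a - a| |s - t| := by
        simpa using abs_max_sub_max_le_max a s a t
    _ = |s - t| := by simp

lemma exists_pos_measure_preimage_Icc_of_Ioo {Ω : Type*} [MeasurableSpace Ω] {μ : Measure Ω}
    {w : Ω → ℝ} {a b : ℝ} (h : 0 < μ (w ⁻¹' Ioo a b)) :
    ∃ δ > 0, 0 < μ (w ⁻¹' Icc (a + δ) (b - δ)) := by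
  by_contra! hnull
  have hcover : w ⁻¹' Ioo a b ⊆ ⋃ n : ℕ, w ⁻¹' Icc (a + 1 / (n + 1)) (b - 1 / (n + 1)) := by
    intro x ⟨hax, hxb⟩
    obtain ⟨n, hn⟩ := exists_nat_one_div_lt (lt_min (sub_pos.2 hax) (sub_pos.2 hxb))
    exact mem_iUnion.2 ⟨n, by linarith [min_le_left (w x - a) (b - w x)],
      by linarith [min_le_right (w x - a) (b - w x)]⟩
  refine h.ne' (measure_mono_null hcover (measure_iUnion_null fun n => ?_))
  exact nonpos_iff_eq_zero.1 (hnull _ Nat.one_div_pos_of_nat)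

lemma mul_measureReal_le_integral_sub {Ω : Type*} [MeasurableSpace Ω] {μ : Measure Ω}
    [IsFiniteMeasure μ]
    {f g : Ω → ℝ} (hf : Integrable f μ) (hg : Integrable g μ) (hfg : f ≤ g)
    {S : Set Ω} (hS : MeasurableSet S) {t : ℝ} (ht : ∀ x ∈ S, t ≤ g x - f x) :
    t * μ.real S ≤ ∫ x, g x ∂μ - ∫ x, f x ∂μ := by
  have hpt : S.indicator (fun _ => t) ≤ g - f := by
    intro x
    by_cases hx : x ∈ S
    · simpa [indicator_of_mem hx] using ht x hx
    · simpa [indicator_of_notMem hx] using hfg x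
  have := integral_mono ((integrable_const t).indicator hS) (hg.sub hf) hpt
  rwa [integral_indicator_const t hS, smul_eq_mul, mul_comm, integral_sub' hg hf] at this

lemma abs_sub_le_of_monotone_of_abs_sub_le {F G : ℝ → ℝ} (hG : Monotone G) {m₀ s η : ℝ}
    (hup : η < F (m₀ + s)) (hdn : F (m₀ - s) < -η) (hclose : ∀ m, |G m - F m| ≤ η)
    {m : ℝ} (hm : G m = 0) : |m - m₀| ≤ s := by
  rw [abs_sub_le_iff]
  constructor
  · by_contra! h
    linarith [hG (show m₀ + s ≤ m by linarith), (abs_le.1 (hclose (m₀ + s))).1]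
  · by_contra! h
    linarith [hG (show m ≤ m₀ - s by linarith), (abs_le.1 (hclose (m₀ - s))).2]

section Clipping

variable {Ω : Type*} [MeasurableSpace Ω] (μ : Measure Ω) (a b : ℝ)

lemma integrable_min_max [IsFiniteMeasure μ] {f : Ω → ℝ} (hf : AEStronglyMeasurable f μ) :
    Integrable (fun x => min b (max a (f x))) μ := by
  refine (integrable_const (|a| + |b|)).mono' ?_ (ae_of_all μ fun x => ?_)
  · exact (continuous_const.min (continuous_const.max continuous_id)).comp_aestronglyMeasurable hf
  · have hlow : -(|a| + |b|) ≤ min b a :=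
      le_min (by linarith [neg_abs_le b, abs_nonneg a]) (by linarith [neg_abs_le a, abs_nonneg b])
    rw [Real.norm_eq_abs, abs_le]
    constructor
    · exact hlow.trans (min_le_min_left b (le_max_left a (f x)))
    · linarith [min_le_left b (max a (f x)), le_abs_self b, abs_nonneg a]

/-- The paper's `M(m) = ∫ P(w + m) dμ`. -/
noncomputable def clipIntegral (w : Ω → ℝ) (m : ℝ) : ℝ :=
  ∫ x, min b (max a (w x + m)) ∂μ

variable [IsFiniteMeasure μ] {a b}

lemma clipIntegral_mono {w : Ω → ℝ} (hw : AEStronglyMeasurable w μ) :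
    Monotone (clipIntegral μ a b w) := fun m₁ m₂ h =>
  integral_mono (integrable_min_max μ a b (hw.add_const m₁))
    (integrable_min_max μ a b (hw.add_const m₂))
    fun x => min_le_min_left b (max_le_max_left a (by linarith))

lemma abs_clipIntegral_sub_le {f g : Ω → ℝ} (hf : AEStronglyMeasurable f μ)
    (hg : AEStronglyMeasurable g μ) (hfg : Integrable (f - g) μ) (m : ℝ) :
    |clipIntegral μ a b f m - clipIntegral μ a b g m| ≤ ∫ x, |f x - g x| ∂μ := by
  have hPf := integrable_min_max μ a b (hf.add_const m)
  have hPg := integrable_min_max μ a b (hg.add_const m)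
  rw [clipIntegral, clipIntegral, ← integral_sub hPf hPg]
  refine abs_integral_le_integral_abs.trans (integral_mono (hPf.sub hPg).abs hfg.abs fun x => ?_)
  simpa using abs_min_max_sub_min_max_le a b (f x + m) (g x + m)

/-- On the `δ`-interior of the inactive set of `w + m`, shifts by at most `δ` stay unclipped. -/
lemma mul_measureReal_le_clipIntegral_sub {w : Ω → ℝ} (hw : Measurable w) {m δ m₁ m₂ : ℝ}
    (h₁ : m - δ ≤ m₁) (h₁₂ : m₁ ≤ m₂) (h₂ : m₂ ≤ m + δ) :
    (m₂ - m₁) * μ.real {x | a + δ ≤ w x + m ∧ w x + m ≤ b - δ} ≤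
      clipIntegral μ a b w m₂ - clipIntegral μ a b w m₁ := by
  have hclip : ∀ s, a ≤ s → s ≤ b → min b (max a s) = s := fun s has hsb => by
    rw [max_eq_right has, min_eq_right hsb]
  refine mul_measureReal_le_integral_sub
    (integrable_min_max μ a b (hw.add_const m₁).aestronglyMeasurable)
    (integrable_min_max μ a b (hw.add_const m₂).aestronglyMeasurable)
    (fun x => min_le_min_left b (max_le_max_left a (by linarith)))
    ((hw.add_const m) measurableSet_Icc) fun x ⟨hax, hxb⟩ => ?_
  rw [hclip _ (by linarith) (by linarith), hclip _ (by linarith) (by linarith)]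
  linarith

end Clipping

theorem stmt_16_general
    {Ω : Type*} [MeasurableSpace Ω] (μ : Measure Ω) [IsFiniteMeasure μ]
    (a b : ℝ)
    (v : Ω → ℝ) (hvmeas : Measurable v)
    (hvL2 : MemLp v 2 μ)
    (M : ℝ → ℝ) (hM : ∀ m, M m = ∫ x, min b (max a (v x + m)) ∂μ)
    (m₀ : ℝ) (hm₀ : M m₀ = 0)
    (hI : 0 < μ {x | a < v x + m₀ ∧ v x + m₀ < b}) :
    ∃ δ : ℝ, 0 < δ ∧ ∃ C : ℝ, 0 < C ∧ ∃ η₀ : ℝ, 0 < η₀ ∧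
      ∀ vt : Ω → ℝ, Measurable vt → MemLp vt 2 μ →
        ∀ η : ℝ, 0 < η → η ≤ η₀ → (∫ x, |vt x - v x| ∂μ) ≤ η →
        ∀ mt : ℝ, (∫ x, min b (max a (vt x + mt)) ∂μ) = 0 →
          |mt - m₀| ≤ C * η /
            (μ {x | a + δ ≤ v x + m₀ ∧ v x + m₀ ≤ b - δ}).toReal := by
  obtain rfl : M = clipIntegral μ a b v := funext hM
  obtain ⟨δ, hδ, hIδ⟩ := exists_pos_measure_preimage_Icc_of_Ioo (w := fun x => v x + m₀) hI
  set κ := μ.real {x | a + δ ≤ v x + m₀ ∧ v x + m₀ ≤ b - δ}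
  have hκ : 0 < κ := ENNReal.toReal_pos hIδ.ne' (measure_ne_top _ _)
  refine ⟨δ, hδ, 2, two_pos, δ * κ / 2, by positivity,
    fun vt hvt hvtL2 η hη hηle hL1 mt hmt => ?_⟩
  set s := 2 * η / κ
  have hs : 0 ≤ s := by positivity
  have hsδ : s ≤ δ := by rw [div_le_iff₀ hκ]; linarith
  have hsκ : s * κ = 2 * η := div_mul_cancel₀ _ hκ.ne'
  have hup : s * κ ≤ clipIntegral μ a b v (m₀ + s) - clipIntegral μ a b v m₀ := by
    have h := mul_measureReal_le_clipIntegral_sub μ (a := a) (b := b) hvmeas (m := m₀)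
      (by linarith : m₀ - δ ≤ m₀) (by linarith : m₀ ≤ m₀ + s) (by linarith)
    rwa [add_sub_cancel_left] at h
  have hdn : s * κ ≤ clipIntegral μ a b v m₀ - clipIntegral μ a b v (m₀ - s) := by
    have h := mul_measureReal_le_clipIntegral_sub μ (a := a) (b := b) hvmeas (m := m₀)
      (by linarith : m₀ - δ ≤ m₀ - s) (by linarith : m₀ - s ≤ m₀) (by linarith)
    rwa [sub_sub_cancel] at h
  have hclose m : |clipIntegral μ a b vt m - clipIntegral μ a b v m| ≤ η :=
    (abs_clipIntegral_sub_le μ hvt.aestronglyMeasurable hvmeas.aestronglyMeasurable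
      ((hvtL2.sub hvL2).integrable one_le_two) m).trans hL1
  exact abs_sub_le_of_monotone_of_abs_sub_le (s := s)
    (clipIntegral_mono μ hvt.aestronglyMeasurable) (by linarith) (by linarith) hclose hmt

theorem stmt_16
    {Ω : Type*} [MeasurableSpace Ω] (μ : Measure Ω) [IsFiniteMeasure μ]
    (a b : ℝ) (ha : a < 0) (hb : 0 < b)
    (v : Ω → ℝ) (hvmeas : Measurable v)
    (Cv : ℝ) (hvbd : ∀ᵐ x ∂μ, |v x| ≤ Cv) (hvL2 : MemLp v 2 μ)
    (M : ℝ → ℝ) (hM : ∀ m, M m = ∫ x, min b (max a (v x + m)) ∂μ)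
    (m₀ : ℝ) (hm₀ : M m₀ = 0) (huniq : ∀ m, M m = 0 → m = m₀)
    (hI : 0 < μ {x | a < v x + m₀ ∧ v x + m₀ < b}) :
    ∃ δ : ℝ, 0 < δ ∧ ∃ C : ℝ, 0 < C ∧ ∃ η₀ : ℝ, 0 < η₀ ∧
      ∀ vt : Ω → ℝ, Measurable vt → MemLp vt 2 μ →
        ∀ η : ℝ, 0 < η → η ≤ η₀ → (∫ x, |vt x - v x| ∂μ) ≤ η →
        ∀ mt : ℝ, (∫ x, min b (max a (vt x + mt)) ∂μ) = 0 →
          |mt - m₀| ≤ C * η /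
            (μ {x | a + δ ≤ v x + m₀ ∧ v x + m₀ ≤ b - δ}).toReal :=
  stmt_16_general μ a b v hvmeas hvL2 M hM m₀ hm₀ hI
end
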